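/- Let G be a connected weighted graph with cutset projection 𝒫 and minimum amplification factor α_p(γ) for p ∈ [1,∞] and γ ∈ [0, π/2). Then α_p(γ) ≥ (1 + sinc(γ))/2 − ‖𝒫‖_p · (1 − sinc(γ))/2. -/

import Mathlib

open Matrix

/-- The unnormalized sinc function, `sinc t = sin t / t` with `sinc 0 = 1`. -/
noncomputable def sinc (t : ℝ) : ℝ := if t = 0 then 1 else Real.sin t / t

/-- The `p`-norm of a real vector, for `p ∈ [1,∞]`. -/
noncomputable def pnorm {k : ℕ} (p : ENNReal) [Fact (1 ≤ p)] (v : Fin k → ℝ) : ℝ :=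
  ‖(WithLp.equiv p (Fin k → ℝ)).symm v‖

/-- The induced matrix `p`-norm, i.e. the operator norm of `x ↦ Mx` with respect to the
vector `p`-norm on domain and codomain. -/
noncomputable def matPNorm {k : ℕ} (p : ENNReal) [Fact (1 ≤ p)]
    (M : Matrix (Fin k) (Fin k) ℝ) : ℝ :=
  ‖LinearMap.toContinuousLinearMap
    ((WithLp.linearEquiv p ℝ (Fin k → ℝ)).symm.toLinearMap ∘ₗ M.mulVecLin ∘ₗ
      (WithLp.linearEquiv p ℝ (Fin k → ℝ)).toLinearMap)‖


/-!
On `Im(Bᵀ)` the cutset projection `𝒫` is the identity: `L (L⁺ L ξ - ξ) = 0` and `ker L = ker Bᵀ`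
because the weights are positive. For `‖y‖_p ≤ γ` every `sinc yₑ` lies in `[sinc γ, 1]`, so
`diag(sinc y) = c I + D` with `c = (1 + sinc γ)/2` and `|Dₑₑ| ≤ (1 - sinc γ)/2`. Hence
`𝒫 diag(sinc y) z = c z + 𝒫 D z`, and the reverse triangle inequality gives the bound.
-/

theorem sinc_eq_real_sinc : sinc = Real.sinc := rfl

namespace Real

theorem sinc_abs (t : ℝ) : sinc |t| = sinc t := by
  rcases abs_choice t with h | h <;> simp only [h, sinc_neg]

theorem sinc_antitoneOn : AntitoneOn sinc (Set.Icc 0 π) := by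
  intro s hs t ht hst
  rcases hs.1.eq_or_lt with rfl | hs0
  · simpa using sinc_le_one t
  rcases hst.eq_or_lt with rfl | hst
  · rfl
  have hπ : (0 : ℝ) ∈ Set.Icc 0 π := ⟨le_rfl, pi_pos.le⟩
  have := strictConcaveOn_sin_Icc.secant_strict_mono hπ hs ht hs0.ne' (hs0.trans hst).ne' hst
  simp only [sin_zero, sub_zero] at this
  rw [sinc_of_ne_zero hs0.ne', sinc_of_ne_zero (hs0.trans hst).ne']
  exact this.le

theorem abs_sinc_sub_midpoint_le {t γ : ℝ} (hγ : γ ≤ π) (ht : |t| ≤ γ) :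
    |sinc t - (1 + sinc γ) / 2| ≤ (1 - sinc γ) / 2 := by
  have hγt : sinc γ ≤ sinc t := by
    rw [← sinc_abs t]
    exact sinc_antitoneOn ⟨abs_nonneg t, ht.trans hγ⟩ ⟨(abs_nonneg t).trans ht, hγ⟩ ht
  rw [abs_le]
  constructor <;> linarith [sinc_le_one t]

end Real

theorem PiLp.norm_mono {p : ENNReal} [Fact (1 ≤ p)] {ι : Type*} [Fintype ι] {β : ι → Type*}
    [∀ i, SeminormedAddCommGroup (β i)] {x y : PiLp p β} (h : ∀ i, ‖x i‖ ≤ ‖y i‖) :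
    ‖x‖ ≤ ‖y‖ := by
  rcases p.trichotomy with rfl | rfl | hp
  · exact absurd (Fact.out : (1 : ENNReal) ≤ 0) (by norm_num)
  · rw [PiLp.norm_eq_ciSup, PiLp.norm_eq_ciSup]
    exact ciSup_mono (Set.finite_range _).bddAbove h
  · rw [PiLp.norm_eq_sum hp, PiLp.norm_eq_sum hp]
    gcongr with i
    exact h i

section PNorm

variable {k : ℕ} (p : ENNReal) [Fact (1 ≤ p)]

theorem abs_apply_le_pnorm (v : Fin k → ℝ) (i : Fin k) : |v i| ≤ pnorm p v :=
  PiLp.norm_apply_le (WithLp.toLp p v) i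

theorem pnorm_smul (c : ℝ) (v : Fin k → ℝ) : pnorm p (c • v) = |c| * pnorm p v :=
  norm_smul c (WithLp.toLp p v)

theorem pnorm_sub_le_pnorm_add (v w : Fin k → ℝ) : pnorm p v - pnorm p w ≤ pnorm p (v + w) :=
  norm_sub_le_norm_add (WithLp.toLp p v) (WithLp.toLp p w)

theorem pnorm_mono {v w : Fin k → ℝ} (h : ∀ i, |v i| ≤ |w i|) : pnorm p v ≤ pnorm p w :=
  PiLp.norm_mono h

theorem pnorm_mulVec_le (M : Matrix (Fin k) (Fin k) ℝ) (v : Fin k → ℝ) :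
    pnorm p (M *ᵥ v) ≤ matPNorm p M * pnorm p v :=
  (LinearMap.toContinuousLinearMap ((WithLp.linearEquiv p ℝ (Fin k → ℝ)).symm.toLinearMap ∘ₗ
    M.mulVecLin ∘ₗ (WithLp.linearEquiv p ℝ (Fin k → ℝ)).toLinearMap)).le_opNorm (WithLp.toLp p v)

theorem pnorm_mul_le {s v : Fin k → ℝ} {d : ℝ} (hd : 0 ≤ d) (hs : ∀ i, |s i| ≤ d) :
    pnorm p (s * v) ≤ d * pnorm p v := by
  rw [← abs_of_nonneg hd, ← pnorm_smul]
  refine pnorm_mono p fun i => ?_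
  simp only [Pi.mul_apply, Pi.smul_apply, smul_eq_mul, abs_mul]
  exact mul_le_mul_of_nonneg_right ((hs i).trans (le_abs_self d)) (abs_nonneg _)

end PNorm

section CutsetProjection

variable {ι κ : Type*} [Fintype ι] [Fintype κ] [DecidableEq κ]

theorem transpose_mulVec_eq_zero_of_mulVec_eq_zero {B : Matrix ι κ ℝ} {a : κ → ℝ}
    (ha : ∀ e, 0 < a e) {x : ι → ℝ} (hx : (B * diagonal a * Bᵀ) *ᵥ x = 0) : Bᵀ *ᵥ x = 0 := by
  have hquad : x ⬝ᵥ (B * diagonal a * Bᵀ) *ᵥ x = ∑ e, a e * (Bᵀ *ᵥ x) e ^ 2 := by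
    rw [← mulVec_mulVec, ← mulVec_mulVec, dotProduct_mulVec, ← mulVec_transpose]
    simp only [dotProduct, mulVec_diagonal]
    exact Finset.sum_congr rfl fun e _ => by ring
  rw [hx, dotProduct_zero, eq_comm, Finset.sum_eq_zero_iff_of_nonneg fun e _ => by
    have := ha e; positivity] at hquad
  funext e
  simpa [(ha e).ne'] using hquad e (Finset.mem_univ e)

def cutsetProjection (B : Matrix ι κ ℝ) (a : κ → ℝ) (Ldag : Matrix ι ι ℝ) : Matrix κ κ ℝ :=
  Bᵀ * Ldag * B * diagonal a

theorem cutsetProjection_mulVec_transpose_mulVec {B : Matrix ι κ ℝ} {a : κ → ℝ}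
    (ha : ∀ e, 0 < a e) {Ldag : Matrix ι ι ℝ}
    (hLdag : B * diagonal a * Bᵀ * Ldag * (B * diagonal a * Bᵀ) = B * diagonal a * Bᵀ)
    (ξ : ι → ℝ) : cutsetProjection B a Ldag *ᵥ Bᵀ *ᵥ ξ = Bᵀ *ᵥ ξ := by
  set L := B * diagonal a * Bᵀ
  have hker : Bᵀ *ᵥ ((Ldag * L) *ᵥ ξ - ξ) = 0 :=
    transpose_mulVec_eq_zero_of_mulVec_eq_zero ha
      (by rw [mulVec_sub, mulVec_mulVec, ← Matrix.mul_assoc, hLdag, sub_self])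
  rw [mulVec_sub, sub_eq_zero, mulVec_mulVec] at hker
  calc cutsetProjection B a Ldag *ᵥ Bᵀ *ᵥ ξ = (Bᵀ * (Ldag * L)) *ᵥ ξ := by
        simp only [cutsetProjection, L, mulVec_mulVec, Matrix.mul_assoc]
    _ = Bᵀ *ᵥ ξ := hker

end CutsetProjection

theorem le_pnorm_mulVec_mul_of_mulVec_eq_self {k : ℕ} (p : ENNReal) [Fact (1 ≤ p)]
    {P : Matrix (Fin k) (Fin k) ℝ} {s z : Fin k → ℝ} {c d : ℝ} (hz : P *ᵥ z = z) (hd : 0 ≤ d) (hs : ∀ i, |s i - c| ≤ d) :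
    |c| * pnorm p z - matPNorm p P * (d * pnorm p z) ≤ pnorm p (P *ᵥ (s * z)) := by
  have hsplit : s * z = c • z + (fun i => s i - c) * z := by
    funext i
    simp only [Pi.mul_apply, Pi.add_apply, Pi.smul_apply, smul_eq_mul]
    ring
  rw [hsplit, mulVec_add, mulVec_smul, hz]
  have hw : pnorm p (P *ᵥ ((fun i => s i - c) * z)) ≤ matPNorm p P * (d * pnorm p z) :=
    (pnorm_mulVec_le p P _).trans
      (mul_le_mul_of_nonneg_left (pnorm_mul_le p hd hs) (norm_nonneg _))
  calc |c| * pnorm p z - matPNorm p P * (d * pnorm p z)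
      ≤ pnorm p (c • z) - pnorm p (P *ᵥ ((fun i => s i - c) * z)) := by
        rw [pnorm_smul]; linarith
    _ ≤ _ := pnorm_sub_le_pnorm_add p _ _

theorem min_amplification_general_lower_bound_general
    (n m : ℕ) (B : Matrix (Fin n) (Fin m) ℝ) (a : Fin m → ℝ)
    (ha : ∀ e, 0 < a e)
    (L Ldag : Matrix (Fin n) (Fin n) ℝ)
    (hL : L = B * Matrix.diagonal a * Bᵀ)
    (hmp1 : L * Ldag * L = L)
    (P : Matrix (Fin m) (Fin m) ℝ)
    (hP : P = Bᵀ * Ldag * B * Matrix.diagonal a)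
    (γ : ℝ) (hγ : 0 ≤ γ ∧ γ < Real.pi / 2)
    (p : ENNReal) [Fact (1 ≤ p)] :
    ∀ y z : Fin m → ℝ,
      (∃ ξ : Fin n → ℝ, y = Bᵀ.mulVec ξ) → pnorm p y ≤ γ →
      (∃ ξ : Fin n → ℝ, z = Bᵀ.mulVec ξ) → pnorm p z = 1 →
      (1 + sinc γ) / 2 - matPNorm p P * ((1 - sinc γ) / 2) ≤
        pnorm p (P.mulVec (fun e => sinc (y e) * z e)) := by
  rintro y _ - hy ⟨ζ, rfl⟩ hz
  simp only [sinc_eq_real_sinc]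
  have hfix : P *ᵥ Bᵀ *ᵥ ζ = Bᵀ *ᵥ ζ := by
    subst hL hP
    exact cutsetProjection_mulVec_transpose_mulVec ha hmp1 ζ
  have hsinc (e : Fin m) : |Real.sinc (y e) - (1 + Real.sinc γ) / 2| ≤ (1 - Real.sinc γ) / 2 :=
    Real.abs_sinc_sub_midpoint_le (by linarith [Real.pi_pos]) ((abs_apply_le_pnorm p y e).trans hy)
  have hmid : |(1 + Real.sinc γ) / 2| = (1 + Real.sinc γ) / 2 :=
    abs_of_nonneg (by linarith [Real.neg_one_le_sinc γ])
  have key :=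
    le_pnorm_mulVec_mul_of_mulVec_eq_self p hfix (by linarith [Real.sinc_le_one γ]) hsinc
  rw [hz, mul_one, mul_one, hmid] at key
  exact key

/-- For a connected weighted graph with cutset projection `𝒫`, the
minimum amplification factor satisfies
`α_p(γ) ≥ (1 + sinc γ)/2 − ‖𝒫‖_p (1 − sinc γ)/2`, i.e. the right-hand side is a lower
bound for `‖𝒫 diag(sinc y) z‖_p` over all `y ∈ Im(Bᵀ)` with `‖y‖_p ≤ γ` and all
`z ∈ Im(Bᵀ)` with `‖z‖_p = 1`. -/
theorem min_amplification_general_lower_bound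
    (n m : ℕ) (B : Matrix (Fin n) (Fin m) ℝ) (a : Fin m → ℝ)
    (ha : ∀ e, 0 < a e)
    (hconn : ∀ x : Fin n → ℝ, Bᵀ.mulVec x = 0 ↔ ∃ c : ℝ, x = fun _ => c)
    (L Ldag : Matrix (Fin n) (Fin n) ℝ)
    (hL : L = B * Matrix.diagonal a * Bᵀ)
    (hmp1 : L * Ldag * L = L) (hmp2 : Ldag * L * Ldag = Ldag)
    (hmp3 : (L * Ldag)ᵀ = L * Ldag) (hmp4 : (Ldag * L)ᵀ = Ldag * L)
    (P : Matrix (Fin m) (Fin m) ℝ)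
    (hP : P = Bᵀ * Ldag * B * Matrix.diagonal a)
    (γ : ℝ) (hγ : 0 ≤ γ ∧ γ < Real.pi / 2)
    (p : ENNReal) [Fact (1 ≤ p)] :
    ∀ y z : Fin m → ℝ,
      (∃ ξ : Fin n → ℝ, y = Bᵀ.mulVec ξ) → pnorm p y ≤ γ →
      (∃ ξ : Fin n → ℝ, z = Bᵀ.mulVec ξ) → pnorm p z = 1 →
      (1 + sinc γ) / 2 - matPNorm p P * ((1 - sinc γ) / 2) ≤
        pnorm p (P.mulVec (fun e => sinc (y e) * z e)) :=
  min_amplification_general_lower_bound_general n m B a ha L Ldag hL hmp1 P hP γ hγ p
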